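/- If p is a walk of length n > 0 in the CPS graph Γ(A) and q, q' are both anchored walks (walks starting at a vertex in 𝔊_0, i.e. at a degree-1 generator) equivalent to p, then q = q'. That is, the anchored walk equivalent to a given admissible walk is unique. -/
import Mathlib


/- Combinatorial model of a monomial algebra A = T(V)/I and its CPS graph Γ(A).
   Monomials of the tensor algebra on generators indexed by σ are lists over σ;
   the tensor product w ⊗ m is list concatenation w ++ m. -/

namespace CPS

/-- Monomials of the tensor algebra: words in the generators. -/
abbrev Mon (σ : Type) := List σ

/-- A monomial ideal, given by finitely many monomial generators of degree ≥ 2. -/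
structure MonIdeal (σ : Type) where
  gens : Finset (Mon σ)
  deg2 : ∀ r ∈ gens, 2 ≤ r.length

variable {σ : Type}

/-- Membership in the two-sided monomial ideal generated by `gens`. -/
def MonIdeal.Mem (I : MonIdeal σ) (m : Mon σ) : Prop :=
  ∃ a r b, r ∈ I.gens ∧ m = a ++ r ++ b

/-- 𝔄_m : the set of minimal left annihilating monomials of m
    (w ∉ I, w ⊗ m ∈ I, and no proper suffix of w left-annihilates m). -/
def Ann (I : MonIdeal σ) (m : Mon σ) : Set (Mon σ) :=
  {w | ¬ I.Mem m ∧ ¬ I.Mem w ∧ I.Mem (w ++ m) ∧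
    ∀ w' : Mon σ, w' <:+ w → w' ≠ w → ¬ I.Mem (w' ++ m)}

/-- Directed edges of the CPS graph Γ(A): m₁ → m₂ iff m₂ ∈ 𝔄_{m₁}. -/
def Edge (I : MonIdeal σ) (m₁ m₂ : Mon σ) : Prop := m₂ ∈ Ann I m₁

/-- The vertex sets 𝔊_i : 𝔊_0 = degree-1 generators, 𝔊_{i+1} = ⋃_{w ∈ 𝔊_i} 𝔄_w. -/
def Gs (I : MonIdeal σ) : ℕ → Set (Mon σ)
  | 0 => {m | m.length = 1}
  | (i+1) => ⋃ w ∈ Gs I i, Ann I w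

/-- The vertex set 𝔊 = ⋃_i 𝔊_i of the CPS graph. -/
def Vertices (I : MonIdeal σ) : Set (Mon σ) := ⋃ i, Gs I i

/-- A walk of length n in Γ(A), encoded by a function giving the vertices
    p 0, p 1, ..., p n (values beyond n are irrelevant). -/
def IsWalk (I : MonIdeal σ) (n : ℕ) (p : ℕ → Mon σ) : Prop :=
  p 0 ∈ Vertices I ∧ ∀ i < n, Edge I (p i) (p (i+1))

/-- An infinite walk in Γ(A). -/
def InfWalk (I : MonIdeal σ) (p : ℕ → Mon σ) : Prop :=
  p 0 ∈ Vertices I ∧ ∀ i, Edge I (p i) (p (i+1))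

/-- The reversed tensor product p_n ⊗ p_{n-1} ⊗ ⋯ ⊗ p_0 of the vertices of a walk. -/
def tens (n : ℕ) (p : ℕ → Mon σ) : Mon σ :=
  (((List.range (n+1)).map p).reverse).flatten

/-- Equivalence of walks of the same length n: equal reversed tensor products. -/
def WEquiv (n : ℕ) (p q : ℕ → Mon σ) : Prop := tens n p = tens n q

/-- A walk is anchored if its first vertex lies in 𝔊_0 (is a degree-1 generator). -/
def Anchored (p : ℕ → Mon σ) : Prop := (p 0).length = 1

/-- A walk is admissible if it is a walk equivalent to an anchored walk. -/
def Admissible (I : MonIdeal σ) (n : ℕ) (p : ℕ → Mon σ) : Prop :=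
  IsWalk I n p ∧ ∃ q, IsWalk I n q ∧ Anchored q ∧ WEquiv n p q

/-- The walk obtained by deleting the first i vertices. -/
def shift (p : ℕ → Mon σ) (i : ℕ) : ℕ → Mon σ := fun t => p (i + t)

end CPS

namespace CPS
/-- Helper: unfolding `tens` at a successor. -/
lemma tens_succ {σ : Type} (n : ℕ) (p : ℕ → Mon σ) :
    tens (n+1) p = p (n+1) ++ tens n p := by
  unfold tens
  rw [List.range_succ, List.map_append, List.reverse_append]
  simp

lemma tens_zero {σ : Type} (p : ℕ → Mon σ) : tens 0 p = p 0 := by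
  simp [tens, List.range_succ]

/-- Helper: `tens i p` is a suffix of `tens n p` for `i ≤ n`. -/
lemma tens_suffix {σ : Type} (p : ℕ → Mon σ) {i n : ℕ} (h : i ≤ n) :
    tens i p <:+ tens n p := by
  induction n with
  | zero => have : i = 0 := Nat.le_zero.mp h; subst this; exact List.suffix_rfl
  | succ n ih =>
    rcases Nat.lt_or_ge i (n+1) with h1 | h1
    · have := ih (Nat.lt_succ_iff.mp h1)
      rw [tens_succ]
      exact this.trans (List.suffix_append _ _)
    · have : i = n + 1 := le_antisymm h h1
      subst this; exact List.suffix_rfl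

lemma suffix_cancel {σ : Type} {a b t : Mon σ} (h : a ++ t <:+ b ++ t) : a <:+ b := by
  obtain ⟨c, hc⟩ := h
  rw [← List.append_assoc] at hc
  exact ⟨c, List.append_cancel_right hc⟩

/-- Lemma 2.7(5): the anchored walk equivalent to a given walk is unique. -/
theorem stmt4 {σ : Type} (I : MonIdeal σ) (n : ℕ) (hn : 0 < n) (p q q' : ℕ → Mon σ)
    (hp : IsWalk I n p) (hq : IsWalk I n q) (hq' : IsWalk I n q')
    (hanc : Anchored q) (hanc' : Anchored q')
    (h : WEquiv n p q) (h' : WEquiv n p q') :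
    ∀ i ≤ n, q i = q' i := by
  have hW : tens n q = tens n q' := h.symm.trans h'
  have key : ∀ i, i ≤ n → q i = q' i ∧ tens i q = tens i q' := by
    intro i
    induction i with
    | zero =>
      intro _
      have h1 : q 0 <:+ tens n q := by
        rw [← tens_zero q]; exact tens_suffix q (Nat.zero_le n)
      have h2 : q' 0 <:+ tens n q := by
        rw [hW, ← tens_zero q']; exact tens_suffix q' (Nat.zero_le n)
      have hcmp := List.suffix_or_suffix_of_suffix h1 h2
      have hlen : (q 0).length = (q' 0).length := hanc.trans hanc'.symm
      have heq : q 0 = q' 0 := by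
        rcases hcmp with hc | hc
        · exact hc.eq_of_length hlen
        · exact (hc.eq_of_length hlen.symm).symm
      exact ⟨heq, by rw [tens_zero, tens_zero, heq]⟩
    | succ i ih =>
      intro hi
      obtain ⟨hqi, hti⟩ := ih (Nat.le_of_succ_le hi)
      have h1 : q (i+1) ++ tens i q <:+ tens n q := by
        rw [← tens_succ]; exact tens_suffix q hi
      have h2 : q' (i+1) ++ tens i q <:+ tens n q := by
        rw [hW, hti, ← tens_succ]; exact tens_suffix q' hi
      have hcmp := List.suffix_or_suffix_of_suffix h1 h2
      have hlt : i < n := Nat.lt_of_succ_le hi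
      have e1 : q (i+1) ∈ Ann I (q i) := hq.2 i hlt
      have e2 : q' (i+1) ∈ Ann I (q i) := by
        have := hq'.2 i hlt
        rwa [← hqi] at this
      have heq : q (i+1) = q' (i+1) := by
        rcases hcmp with hc | hc
        · have hc' := suffix_cancel hc
          by_contra hne
          exact (e2.2.2.2 _ hc' hne) e1.2.2.1
        · have hc' := suffix_cancel hc
          by_contra hne
          exact (e1.2.2.2 _ hc' (fun hx => hne hx.symm)) e2.2.2.1
      exact ⟨heq, by rw [tens_succ, tens_succ, heq, hti]⟩
  intro i hi
  exact (key i hi).1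
end CPS
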